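/- arXiv:1710.11352 — 2 statements merged into one kernel-verified Lean document; each statement's English description precedes it below -/
import Mathlib

section
/- Every finite tree with at least three vertices that is not a star is killer-win for the cop and killer game. -/
namespace CopKiller

variable {V : Type*}

/-- A cop strategy: an initial vertex, and a move function that, given the history of
states `(cop position, killer position)` so far (most recent first), produces the cop's
next vertex. -/
structure CopStrategy (V : Type*) where
  init : V
  move : List (V × V) → V

/-- A killer strategy: an initial vertex chosen knowing the cop's initial vertex, and a
move function that, given the history of states so far (most recent first) and the cop's
just-chosen new position, produces the killer's next vertex. -/
structure KillerStrategy (V : Type*) where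
  init : V → V
  move : List (V × V) → V → V

/-- The history of states after `n` full rounds, most recent first. -/
def hist (cs : CopStrategy V) (ks : KillerStrategy V) : ℕ → List (V × V)
  | 0 => [(cs.init, ks.init cs.init)]
  | n + 1 =>
      let h := hist cs ks n
      let c := cs.move h
      (c, ks.move h c) :: h

/-- The cop's position after the cop's `n`-th move (`n = 0` is the initial position). -/
def copPos (cs : CopStrategy V) (ks : KillerStrategy V) : ℕ → V
  | 0 => cs.init
  | n + 1 => cs.move (hist cs ks n)

/-- The killer's position after the killer's `n`-th move (`n = 0` is the initial position). -/
def killerPos (cs : CopStrategy V) (ks : KillerStrategy V) : ℕ → V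
  | 0 => ks.init cs.init
  | n + 1 =>
      let h := hist cs ks n
      ks.move h (cs.move h)

/-- A cop strategy is legal on `G` when every move goes to a vertex adjacent to the cop's
current vertex. -/
def CopLegal (G : SimpleGraph V) (cs : CopStrategy V) : Prop :=
  ∀ (h : List (V × V)) (s : V × V), h.head? = some s → G.Adj s.1 (cs.move h)

/-- A killer strategy is legal on `G` when every move goes to a vertex adjacent to the
killer's current vertex. -/
def KillerLegal (G : SimpleGraph V) (ks : KillerStrategy V) : Prop :=
  ∀ (h : List (V × V)) (s : V × V), h.head? = some s → ∀ c : V, G.Adj s.2 (ks.move h c)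

/-- The cop wins the play: on some cop move the cop lands on the killer's current vertex,
the killer not having captured the cop on any earlier killer move. -/
def CopWinsPlay (cs : CopStrategy V) (ks : KillerStrategy V) : Prop :=
  ∃ n : ℕ, copPos cs ks (n + 1) = killerPos cs ks n ∧
    ∀ m : ℕ, 1 ≤ m → m ≤ n → killerPos cs ks m ≠ copPos cs ks m

/-- The killer wins the play: on some killer move the killer lands on the cop's current
vertex, the cop not having captured the killer on any earlier or simultaneous cop move. -/
def KillerWinsPlay (cs : CopStrategy V) (ks : KillerStrategy V) : Prop :=
  ∃ n : ℕ, 1 ≤ n ∧ killerPos cs ks n = copPos cs ks n ∧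
    ∀ m : ℕ, 1 ≤ m → m ≤ n → copPos cs ks m ≠ killerPos cs ks (m - 1)

/-- `G` is cop-win: the cop has a legal strategy winning against every legal killer strategy. -/
def CopWin (G : SimpleGraph V) : Prop :=
  ∃ cs : CopStrategy V, CopLegal G cs ∧
    ∀ ks : KillerStrategy V, KillerLegal G ks → CopWinsPlay cs ks

/-- `G` is killer-win: the killer has a legal strategy winning against every legal cop strategy. -/
def KillerWin (G : SimpleGraph V) : Prop :=
  ∃ ks : KillerStrategy V, KillerLegal G ks ∧
    ∀ cs : CopStrategy V, CopLegal G cs → KillerWinsPlay cs ks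

/-- `G` is a stalemate: neither player has a winning strategy. -/
def Stalemate (G : SimpleGraph V) : Prop :=
  ¬ CopWin G ∧ ¬ KillerWin G

/-- `G` has a universal vertex: a vertex adjacent to every other vertex. -/
def HasUniversalVertex (G : SimpleGraph V) : Prop :=
  ∃ v : V, ∀ w : V, w ≠ v → G.Adj v w

/-- `G` is a star: there is a vertex `v` such that the edges of `G` are exactly the pairs
containing `v`. -/
def IsStar (G : SimpleGraph V) : Prop :=
  ∃ v : V, ∀ a b : V, G.Adj a b ↔ (a = v ∨ b = v) ∧ a ≠ b

end CopKiller

namespace CopKiller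

/-- The tensor (categorical) product of two simple graphs:
`(g,h) ∼ (g',h')` iff `g ∼ g'` and `h ∼ h'`. -/
def tensorProd {α β : Type*} (G : SimpleGraph α) (H : SimpleGraph β) :
    SimpleGraph (α × β) where
  Adj x y := G.Adj x.1 y.1 ∧ H.Adj x.2 y.2
  symm := by
    constructor
    rintro x y ⟨h1, h2⟩
    exact ⟨h1.symm, h2.symm⟩
  loopless := by
    constructor
    rintro x ⟨h1, _⟩
    exact G.loopless.irrefl x.1 h1

/-- The strong product of two simple graphs: distinct `(g,h)` and `(g',h')` are adjacent
iff (`g = g'` or `g ∼ g'`) and (`h = h'` or `h ∼ h'`). -/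
def strongProd {α β : Type*} (G : SimpleGraph α) (H : SimpleGraph β) :
    SimpleGraph (α × β) where
  Adj x y := x ≠ y ∧ (x.1 = y.1 ∨ G.Adj x.1 y.1) ∧ (x.2 = y.2 ∨ H.Adj x.2 y.2)
  symm := by
    constructor
    rintro x y ⟨hne, h1, h2⟩
    exact ⟨hne.symm, h1.imp (fun e => e.symm) (fun a => a.symm),
      h2.imp (fun e => e.symm) (fun a => a.symm)⟩
  loopless := by
    constructor
    rintro x ⟨hne, -, -⟩
    exact hne rfl

open scoped Classical in
/-- The probability that the Erdős–Rényi random graph `G(n,p)` (each of the `n.choose 2`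
possible edges present independently with probability `p`) satisfies the property `A`. -/
noncomputable def erProb (n : ℕ) (p : ℝ) (A : SimpleGraph (Fin n) → Prop) : ℝ :=
  ∑ G : SimpleGraph (Fin n),
    if A G then p ^ G.edgeSet.ncard * (1 - p) ^ (n.choose 2 - G.edgeSet.ncard) else 0

/-- The number of cycles of length `n` in `G`, i.e. the number of subgraphs of `G`
isomorphic to the cycle graph `C_n`. -/
noncomputable def numCycles {V : Type*} (G : SimpleGraph V) (n : ℕ) : ℕ :=
  {H : G.Subgraph | Nonempty (H.coe ≃g SimpleGraph.cycleGraph n)}.ncard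

end CopKiller

/-!
The killer starts at distance 2 from the cop; such a vertex exists because a tree with a
universal vertex is a star. Whenever the cop moves next to the killer, the killer captures;
otherwise the killer steps onto the vertex `w` between them. Since the cop had to avoid `w`,
in a tree it moves away from the killer's starting vertex `r`: the two stay at distance 2 and
the cop's distance from `r` grows by one every round. Distances are smaller than `|V|`, so the
killer captures within `|V|` rounds, and at distance 2 the cop never lands on the killer first.
-/

namespace SimpleGraph

variable {V : Type*} {G : SimpleGraph V}

theorem dist_lt_card [Fintype V] (u v : V) : G.dist u v < Fintype.card V := by
  by_cases h : G.Reachable u v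
  · obtain ⟨p, hp, hl⟩ := h.exists_path_of_dist
    exact hl ▸ hp.length_lt
  · rw [dist_eq_zero_of_not_reachable h]
    exact Fintype.card_pos_iff.mpr ⟨u⟩

theorem Connected.exists_adj_dist_add_one (hG : G.Connected) {k c : V} (hne : k ≠ c) :
    ∃ w, G.Adj k w ∧ G.dist w c + 1 = G.dist k c := by
  obtain ⟨p, hp⟩ := hG.exists_walk_length_eq_dist k c
  cases p with
  | nil => exact absurd rfl hne
  | @cons _ w _ hkw q =>
    have hq := dist_le q
    have htri := hG.dist_triangle (u := k) (v := w) (w := c)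
    rw [Walk.length_cons] at hp
    rw [dist_eq_one_iff_adj.mpr hkw] at htri
    exact ⟨w, hkw, by omega⟩

theorem Connected.exists_dist_eq_of_le (hG : G.Connected) {u w : V} {n : ℕ}
    (hn : n ≤ G.dist u w) : ∃ x, G.dist u x = n := by
  suffices ∀ m ≤ G.dist u w, ∃ x, G.dist u x + m = G.dist u w by
    obtain ⟨x, hx⟩ := this (G.dist u w - n) (Nat.sub_le _ _)
    exact ⟨x, by omega⟩
  intro m hm
  induction m with
  | zero => exact ⟨w, rfl⟩
  | succ m ih =>
    obtain ⟨x, hx⟩ := ih (by omega)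
    have hxu : x ≠ u := by
      rintro rfl
      rw [dist_self] at hx
      omega
    obtain ⟨y, -, hy⟩ := hG.exists_adj_dist_add_one hxu
    exact ⟨y, by rw [dist_comm, ← hx, dist_comm (u := u) (v := x), ← hy]; ring⟩

theorem IsTree.eq_of_adj_of_dist_lt (hG : G.IsTree) {u x w w' : V} (hw : G.Adj x w)
    (hw' : G.Adj x w') (hdw : G.dist u w < G.dist u x) (hdw' : G.dist u w' < G.dist u x) :
    w = w' := by
  classical
  obtain ⟨q, hq, hql⟩ := hG.connected.exists_path_of_dist u x
  suffices ∀ v, G.Adj x v → G.dist u v < G.dist u x → v = q.penultimate from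
    (this w hw hdw).trans (this w' hw' hdw').symm
  intro v hv hdv
  refine hG.isAcyclic.eq_penultimate_of_adj_end hq hv ?_
  by_contra hvq
  obtain ⟨p, hp, hpl⟩ := hG.connected.exists_path_of_dist u v
  have hxp := hG.isAcyclic.mem_support_of_ne_mem_support_of_adj_of_isPath hp hq hv.symm hvq
  have := (dist_le (p.takeUntil x hxp)).trans (p.length_takeUntil_le_length hxp)
  omega

theorem IsTree.dist_eq_dist_add_one_of_adj_of_ne (hG : G.IsTree) {r w c c' : V}
    (hw : G.Adj c w) (hc' : G.Adj c c') (hne : c' ≠ w) (hwc : G.dist r w + 1 = G.dist r c) :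
    G.dist r c' = G.dist r c + 1 := by
  rcases hG.dist_eq_dist_add_one_of_adj r hc' with h | h
  · exact absurd (hG.eq_of_adj_of_dist_lt (u := r) hc' hw (by omega) (by omega)) hne
  · exact h

theorem Connected.exists_adj_toward [Nontrivial V] (hG : G.Connected) (k c : V) :
    ∃ w, G.Adj k w ∧ (k ≠ c → G.dist w c + 1 = G.dist k c) := by
  by_cases h : k = c
  · obtain ⟨w, hw⟩ := hG.preconnected.exists_adj_of_nontrivial k
    exact ⟨w, hw, absurd h⟩
  · obtain ⟨w, hw, hd⟩ := hG.exists_adj_dist_add_one h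
    exact ⟨w, hw, fun _ => hd⟩

end SimpleGraph

namespace CopKiller

open SimpleGraph

variable {V : Type*} {G : SimpleGraph V}

theorem isStar_of_hasUniversalVertex (hG : G.IsAcyclic) (h : HasUniversalVertex G) :
    IsStar G := by
  obtain ⟨v, hv⟩ := h
  refine ⟨v, fun a b => ⟨fun hab => ⟨?_, hab.ne⟩, ?_⟩⟩
  · classical
    by_contra! hab'
    exact hG.cliqueFree le_rfl {v, a, b}
      (is3Clique_triple_iff.mpr ⟨hv a hab'.1, hv b hab'.2, hab⟩)
  · rintro ⟨rfl | rfl, hne⟩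
    · exact hv b hne.symm
    · exact (hv a hne).symm

theorem exists_dist_eq_two_of_not_isStar (hG : G.IsTree) (hstar : ¬ IsStar G) (v : V) :
    ∃ k, G.dist v k = 2 := by
  obtain ⟨w, hwv, hvw⟩ : ∃ w, w ≠ v ∧ ¬ G.Adj v w := by
    by_contra! h
    exact hstar (isStar_of_hasUniversalVertex hG.isAcyclic ⟨v, h⟩)
  exact hG.connected.exists_dist_eq_of_le
    (hG.connected.one_lt_dist_of_ne_of_not_adj hwv.symm hvw)

theorem hist_head? (cs : CopStrategy V) (ks : KillerStrategy V) (n : ℕ) :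
    (hist cs ks n).head? = some (copPos cs ks n, killerPos cs ks n) := by
  cases n <;> rfl

theorem CopLegal.adj_copPos_succ {cs : CopStrategy V} (hcs : CopLegal G cs)
    (ks : KillerStrategy V) (n : ℕ) : G.Adj (copPos cs ks n) (copPos cs ks (n + 1)) :=
  hcs _ _ (hist_head? cs ks n)

theorem KillerLegal.adj_killerPos_succ {ks : KillerStrategy V} (hks : KillerLegal G ks)
    (cs : CopStrategy V) (n : ℕ) : G.Adj (killerPos cs ks n) (killerPos cs ks (n + 1)) :=
  hks _ _ (hist_head? cs ks n) _

/-- The positional killer strategy in which, after the cop has moved from `c` to `c'`, the killer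
moves from `k` to `react c k c'`. -/
def KillerStrategy.ofPositional (init : V → V) (react : V → V → V → V) :
    KillerStrategy V where
  init := init
  move h c' := match h.head? with
    | some (c, k) => react c k c'
    | none => c'

theorem killerPos_ofPositional_succ (cs : CopStrategy V) (init : V → V)
    (react : V → V → V → V) (n : ℕ) :
    killerPos cs (.ofPositional init react) (n + 1) =
      react (copPos cs (.ofPositional init react) n) (killerPos cs (.ofPositional init react) n)
        (copPos cs (.ofPositional init react) (n + 1)) := by
  simp only [killerPos, KillerStrategy.ofPositional]
  rw [hist_head?]
  rfl

theorem killerLegal_ofPositional {init : V → V} {react : V → V → V → V}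
    (hreact : ∀ c k c', G.Adj k (react c k c')) : KillerLegal G (.ofPositional init react) := by
  rintro h ⟨c, k⟩ hs c'
  simp only [KillerStrategy.ofPositional, hs]
  exact hreact c k c'

theorem killerWinsPlay_of_capture {cs : CopStrategy V} {ks : KillerStrategy V}
    (hcs : CopLegal G cs) (hstart : killerPos cs ks 0 ≠ copPos cs ks 0)
    (hdist : ∀ n, (∀ j ≤ n, killerPos cs ks j ≠ copPos cs ks j) →
      G.dist (copPos cs ks n) (killerPos cs ks n) = 2)
    (hcapture : ∃ n, killerPos cs ks n = copPos cs ks n) : KillerWinsPlay cs ks := by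
  classical
  have hpos : Nat.find hcapture ≠ 0 := fun h => hstart (h ▸ Nat.find_spec hcapture)
  refine ⟨Nat.find hcapture, by omega, Nat.find_spec hcapture, fun m hm hmn heq => ?_⟩
  have h2 := hdist (m - 1) fun j hj => Nat.find_min hcapture (by omega)
  have hadj := hcs.adj_copPos_succ ks (m - 1)
  rw [Nat.sub_add_cancel hm, heq] at hadj
  rw [dist_eq_one_iff_adj.mpr hadj] at h2
  omega

theorem chase_step (hG : G.IsTree) {r c k w c' : V} (hck : G.dist c k = 2)
    (hr : G.dist r c = G.dist r k + 2) (hkw : G.Adj k w) (hwc : G.dist w c + 1 = G.dist k c)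
    (hcc' : G.Adj c c') (hkc' : ¬ G.Adj k c') :
    G.dist c' w = 2 ∧ G.dist r c' = G.dist r w + 2 ∧ G.dist r c' = G.dist r c + 1 := by
  have hwc : G.Adj w c := dist_eq_one_iff_adj.mp (by rw [dist_comm] at hck; omega)
  have hrw : G.dist r w + 1 = G.dist r c := by
    rcases hG.dist_eq_dist_add_one_of_adj r hkw with h | h <;>
      rcases hG.dist_eq_dist_add_one_of_adj r hwc with h' | h' <;> omega
  have hne : c' ≠ w := by
    rintro rfl
    exact hkc' hkw
  have hrc' := hG.dist_eq_dist_add_one_of_adj_of_ne hwc.symm hcc' hne hrw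
  have hwc' := hG.dist_eq_dist_add_one_of_adj_of_ne (r := w) hwc.symm hcc' hne
    (by rw [dist_self, dist_eq_one_iff_adj.mpr hwc])
  rw [dist_eq_one_iff_adj.mpr hwc] at hwc'
  exact ⟨by rw [dist_comm, hwc'], by omega, hrc'⟩

theorem chase_invariant (hG : G.IsTree) {c k : ℕ → V} (hc : ∀ n, G.Adj (c n) (c (n + 1)))
    (hk : ∀ n, G.Adj (k n) (k (n + 1)))
    (hchase : ∀ n, k n ≠ c n → k (n + 1) ≠ c (n + 1) →
      ¬ G.Adj (k n) (c (n + 1)) ∧ G.dist (k (n + 1)) (c n) + 1 = G.dist (k n) (c n))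
    (h0 : G.dist (c 0) (k 0) = 2) (n : ℕ) (hn : ∀ j ≤ n, k j ≠ c j) :
    G.dist (c n) (k n) = 2 ∧ G.dist (k 0) (c n) = G.dist (k 0) (k n) + 2 ∧
      n + 2 ≤ G.dist (k 0) (c n) := by
  induction n with
  | zero => simp [dist_comm (u := k 0), h0]
  | succ n ih =>
    obtain ⟨h2, hr, hlen⟩ := ih fun j hj => hn j (by omega)
    obtain ⟨hnadj, hstep⟩ := hchase n (hn n (by omega)) (hn (n + 1) le_rfl)
    obtain ⟨h2', hr', hrc⟩ := chase_step hG h2 hr (hk n) hstep (hc n) hnadj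
    exact ⟨h2', hr', by omega⟩

open scoped Classical in
noncomputable def chase (G : SimpleGraph V) (init : V → V) (toward : V → V → V) :
    KillerStrategy V :=
  .ofPositional init fun c k c' => if G.Adj k c' then c' else toward k c

theorem killerLegal_chase {init : V → V} {toward : V → V → V}
    (hadj : ∀ k c, G.Adj k (toward k c)) : KillerLegal G (chase G init toward) :=
  killerLegal_ofPositional fun c k c' => by
    split_ifs with h
    exacts [h, hadj k c]

theorem killerPos_chase_succ_of_ne {init : V → V} {toward : V → V → V} {cs : CopStrategy V}
    {n : ℕ}
    (hne : killerPos cs (chase G init toward) (n + 1) ≠ copPos cs (chase G init toward) (n + 1)) :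
    ¬ G.Adj (killerPos cs (chase G init toward) n) (copPos cs (chase G init toward) (n + 1)) ∧
      killerPos cs (chase G init toward) (n + 1) =
        toward (killerPos cs (chase G init toward) n) (copPos cs (chase G init toward) n) := by
  rw [chase, killerPos_ofPositional_succ] at hne ⊢
  split_ifs at hne ⊢ with h
  · exact absurd rfl hne
  · exact ⟨h, rfl⟩

theorem killerWinsPlay_chase [Fintype V] (hG : G.IsTree) {init : V → V} {toward : V → V → V}
    (hinit : ∀ c, G.dist c (init c) = 2) (hadj : ∀ k c, G.Adj k (toward k c))
    (hstep : ∀ k c, k ≠ c → G.dist (toward k c) c + 1 = G.dist k c)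
    {cs : CopStrategy V} (hcs : CopLegal G cs) : KillerWinsPlay cs (chase G init toward) := by
  have hinv := chase_invariant hG (hcs.adj_copPos_succ _)
    ((killerLegal_chase hadj).adj_killerPos_succ cs)
    (fun n hne hne' => by
      obtain ⟨hnadj, hk⟩ := killerPos_chase_succ_of_ne hne'
      exact ⟨hnadj, hk ▸ hstep _ _ hne⟩)
    (hinit cs.init)
  have hstart : killerPos cs (chase G init toward) 0 ≠ copPos cs (chase G init toward) 0 :=
    fun h => by
      have h' : init cs.init = cs.init := h
      simpa [h'] using hinit cs.init
  refine killerWinsPlay_of_capture hcs hstart (fun n hn => (hinv n hn).1) ?_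
  by_contra! hnever
  have hfar := (hinv (Fintype.card V) fun j _ => hnever j).2.2
  have := dist_lt_card (G := G) (killerPos cs (chase G init toward) 0)
    (copPos cs (chase G init toward) (Fintype.card V))
  omega

end CopKiller

theorem tree_not_star_killerWin_general {V : Type*} [Fintype V] (G : SimpleGraph V)
    (hconn : G.Connected) (hacyc : G.IsAcyclic)
    (hstar : ¬ CopKiller.IsStar G) :
    CopKiller.KillerWin G := by
  have hG : G.IsTree := ⟨hconn, hacyc⟩
  choose init hinit using CopKiller.exists_dist_eq_two_of_not_isStar hG hstar
  obtain ⟨v⟩ := hconn.nonempty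
  have : Nontrivial V := ⟨v, init v, fun h => by simpa [← h] using hinit v⟩
  choose toward hadj hstep using hconn.exists_adj_toward
  exact ⟨CopKiller.chase G init toward, CopKiller.killerLegal_chase hadj,
    fun cs hcs => CopKiller.killerWinsPlay_chase hG hinit hadj hstep hcs⟩

/-- Every finite tree with at least three vertices that is not a star is
killer-win for the cop and killer game. -/
theorem tree_not_star_killerWin {V : Type*} [Fintype V] (G : SimpleGraph V)
    (hconn : G.Connected) (hacyc : G.IsAcyclic)
    (hcard : 3 ≤ Fintype.card V) (hstar : ¬ CopKiller.IsStar G) :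
    CopKiller.KillerWin G :=
  tree_not_star_killerWin_general G hconn hacyc hstar
end

section
/- For every integer m ≥ 1, there exists a finite simple graph that is killer-win for the cop and killer game, is not bipartite, and contains no cycle of length 2k+1 for any 1 ≤ k ≤ m. -/
namespace SimpleGraph

open Fin.CommRing in
theorem cycleGraph.exists_lift_of_walk {n : ℕ} {u v : Fin (n + 2)}
    (p : (cycleGraph (n + 2)).Walk u v) :
    ∃ z : ℤ, (z : Fin (n + 2)) = v - u ∧ z.natAbs ≤ p.length ∧ Even (z + p.length) := by
  induction p with
  | nil => exact ⟨0, by simp, by simp, by simp⟩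
  | @cons u w v h p ih =>
    obtain ⟨z, hz, hle, heven⟩ := ih
    rw [Walk.length_cons]
    rcases cycleGraph_adj.mp h with h | h
    · refine ⟨z - 1, ?_, by omega, ?_⟩
      · push_cast
        linear_combination hz + h
      · rwa [show z - 1 + ((p.length + 1 : ℕ) : ℤ) = z + p.length by push_cast; ring]
    · refine ⟨z + 1, ?_, by omega, ?_⟩
      · push_cast
        linear_combination hz - h
      · rw [show z + 1 + ((p.length + 1 : ℕ) : ℤ) = z + p.length + 2 by push_cast; ring]
        exact heven.add even_two

theorem cycleGraph.le_length_of_odd {n : ℕ} {u : Fin (n + 2)} (p : (cycleGraph (n + 2)).Walk u u)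
    (hp : Odd p.length) : n + 2 ≤ p.length := by
  obtain ⟨z, hz, hle, heven⟩ := cycleGraph.exists_lift_of_walk p
  rw [sub_self] at hz
  -- `ZMod (n + 2)` is `Fin (n + 2)` by definition
  obtain ⟨t, rfl⟩ : ((n + 2 : ℕ) : ℤ) ∣ z :=
    (ZMod.intCast_zmod_eq_zero_iff_dvd z (n + 2)).mp hz
  have ht : t ≠ 0 := by
    rintro rfl
    simp only [mul_zero, zero_add, Int.even_coe_nat] at heven
    exact Nat.not_even_iff_odd.mpr hp heven
  rw [Int.natAbs_mul, Int.natAbs_natCast] at hle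
  exact le_trans (Nat.le_mul_of_pos_right _ (Int.natAbs_pos.mpr ht)) hle

theorem Colorable.of_comap {V W : Type*} {G : SimpleGraph W} {f : V → W}
    (hf : Function.Surjective f) {n : ℕ} (h : (G.comap f).Colorable n) : G.Colorable n :=
  h.of_hom ⟨Function.surjInv hf, by simp [Function.surjInv_eq hf]⟩

theorem cycleGraph.not_colorable_two_of_odd {n : ℕ} (h : 2 ≤ n) (hn : Odd n) :
    ¬ (cycleGraph n).Colorable 2 := fun hc => by
  have := hc.chromaticNumber_le
  rw [chromaticNumber_cycleGraph_of_odd n h hn] at this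
  norm_num at this

end SimpleGraph

namespace CopKiller

variable {V : Type*}

section ChaseKiller

variable (G : SimpleGraph V) [DecidableRel G.Adj]

def chaseKiller (start step : V → V) : KillerStrategy V where
  init := start
  move h c := match h with
    | [] => c
    | s :: _ => if G.Adj s.2 c then c else step s.2

variable {G}

theorem killerLegal_chaseKiller {start step : V → V} (hstep : ∀ v, G.Adj v (step v)) :
    KillerLegal G (chaseKiller G start step) := by
  rintro (_ | ⟨s, h⟩) s' hs c
  · cases hs
  · obtain rfl : s = s' := Option.some_injective _ hs
    change G.Adj s.2 (if G.Adj s.2 c then c else step s.2)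
    split_ifs with hc
    exacts [hc, hstep s.2]

theorem killerWinsPlay_chaseKiller {start step : V → V} (hstart : ∀ v, ¬ G.Adj v (start v))
    (hnbr : ∀ v, G.neighborSet v ⊆ G.neighborSet (start v)) {cs : CopStrategy V}
    (hcs : CopLegal G cs) : KillerWinsPlay cs (chaseKiller G start step) := by
  have hc₁ : G.Adj cs.init (copPos cs (chaseKiller G start step) 1) :=
    hcs _ (cs.init, start cs.init) rfl
  refine ⟨1, le_rfl, if_pos (hnbr _ hc₁), fun k hk₁ hk₂ hk => ?_⟩
  obtain rfl : k = 1 := by omega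
  rw [hk] at hc₁
  exact hstart cs.init hc₁

end ChaseKiller

theorem killerWin_of_forall_exists_twin {G : SimpleGraph V} (hadj : ∀ v, ∃ w, G.Adj v w)
    (htwin : ∀ v, ∃ w, ¬ G.Adj v w ∧ G.neighborSet v ⊆ G.neighborSet w) : KillerWin G := by
  classical
  choose step hstep using hadj
  choose start hstart hnbr using htwin
  exact ⟨chaseKiller G start step, killerLegal_chaseKiller hstep,
    fun _ hcs => killerWinsPlay_chaseKiller hstart hnbr hcs⟩

end CopKiller

open SimpleGraph CopKiller in
theorem exists_killerWin_nonbipartite_oddCycleFree_general (m : ℕ) :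
    ∃ (n : ℕ) (G : SimpleGraph (Fin n)),
      CopKiller.KillerWin G ∧ ¬ G.Colorable 2 ∧
      ∀ k : ℕ, 1 ≤ k → k ≤ m →
        ∀ (v : Fin n) (c : G.Walk v v), c.IsCycle → c.length ≠ 2 * k + 1 := by
  let e : Fin (2 * m + 3) × Fin 2 ≃ Fin ((2 * m + 3) * 2) := finProdFinEquiv
  let f : Fin ((2 * m + 3) * 2) → Fin (2 * m + 3) := fun v => (e.symm v).1
  have hf : Function.Surjective f := fun a => ⟨e (a, 0), by simp [f]⟩
  refine ⟨_, (cycleGraph (2 * m + 3)).comap f, killerWin_of_forall_exists_twin ?_ ?_, ?_, ?_⟩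
  · intro v
    obtain ⟨⟨a, b⟩, rfl⟩ := e.surjective v
    exact ⟨e (a + 1, b), by simp [f, cycleGraph_adj]⟩
  · intro v
    obtain ⟨⟨a, b⟩, rfl⟩ := e.surjective v
    exact ⟨e (a, b + 1), by simp [f], fun x => by simp [f]⟩
  · exact fun h => cycleGraph.not_colorable_two_of_odd (by omega) (odd_two_mul_add_one (m + 1))
      (h.of_comap hf)
  · intro k _ hk v c _ hc
    have := cycleGraph.le_length_of_odd (n := 2 * m + 1) (c.map (Hom.comap f _))
      (by simp [hc])
    simp only [Walk.length_map] at this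
    omega

/-- For every integer `m ≥ 1`, there exists a finite simple graph that is
killer-win, is not bipartite, and contains no cycle of length `2k+1` for any `1 ≤ k ≤ m`. -/
theorem exists_killerWin_nonbipartite_oddCycleFree (m : ℕ) (hm : 1 ≤ m) :
    ∃ (n : ℕ) (G : SimpleGraph (Fin n)),
      CopKiller.KillerWin G ∧ ¬ G.Colorable 2 ∧
      ∀ k : ℕ, 1 ≤ k → k ≤ m →
        ∀ (v : Fin n) (c : G.Walk v v), c.IsCycle → c.length ≠ 2 * k + 1 :=
  exists_killerWin_nonbipartite_oddCycleFree_general m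
end
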